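/- arXiv:1411.1979 — 5 statements merged into one kernel-verified Lean document; each statement's English description precedes it below -/
import Mathlib

section
/- Let R ≥ 0 and let λ be a positive, increasing, smooth function on [R, ∞). Let g be a positive differentiable function on [R, ∞) such that log g(x) is a convex function of log x. Suppose there exist x₁ and x₂ with R ≤ x₂ < x₁ such that g(x₁) = λ(x₁) and g(x₂) < λ(x₂). Then there is some x₀ with x₂ < x₀ ≤ x₁ such that g(x₀) = λ(x₀) and ∫_{x₀}^∞ g(x)·λ(x)^{−1} dx ≥ S(x₀, λ). -/
open MeasureTheory Real Set Filter Topology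

/-- `S(x₀, λ) = ∫_{x₀}^∞ (λ(x₀)/λ(x)) · (x/x₀)^{x₀·λ′(x₀)/λ(x₀)} dx`, valued in `ℝ≥0∞`. -/
noncomputable def Sfun (l : ℝ → ℝ) (x₀ : ℝ) : ENNReal :=
  ∫⁻ x in Set.Ioi x₀,
    ENNReal.ofReal ((l x₀ / l x) * (x / x₀) ^ (x₀ * deriv l x₀ / l x₀))

/-- Lemma: if `g` is a positive differentiable function which is log-convex in `log x`,
`λ` is positive, increasing and smooth on `[R,∞)`, `g(x₁) = λ(x₁)` and `g(x₂) < λ(x₂)`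
for some `R ≤ x₂ < x₁`, then there is `x₀ ∈ (x₂, x₁]` with `g(x₀) = λ(x₀)` and
`∫_{x₀}^∞ g(x) λ(x)^{−1} dx ≥ S(x₀, λ)`. -/
theorem exists_touching_point_integral_lower_bound
    (R x₁ x₂ : ℝ) (hR : 0 ≤ R)
    (l g : ℝ → ℝ)
    (hlpos : ∀ x ∈ Set.Ici R, 0 < l x)
    (hlmono : MonotoneOn l (Set.Ici R))
    (hlsmooth : ContDiffOn ℝ (⊤ : ℕ∞) l (Set.Ici R))
    (hgpos : ∀ x ∈ Set.Ici R, 0 < g x)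
    (hgdiff : DifferentiableOn ℝ g (Set.Ici R))
    (hgconv : ConvexOn ℝ (Real.exp ⁻¹' Set.Ici R) (fun X => Real.log (g (Real.exp X))))
    (hx₂ : R ≤ x₂) (hx₁₂ : x₂ < x₁)
    (h₁ : g x₁ = l x₁) (h₂ : g x₂ < l x₂) :
    ∃ x₀ ∈ Set.Ioc x₂ x₁, g x₀ = l x₀ ∧
      Sfun l x₀ ≤ ∫⁻ x in Set.Ioi x₀, ENNReal.ofReal (g x / l x) := by
  have hgc : ContinuousOn g (Set.Ici R) := hgdiff.continuousOn
  have hlc : ContinuousOn l (Set.Ici R) := hlsmooth.continuousOn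
  have hsub : Set.Icc x₂ x₁ ⊆ Set.Ici R := fun x hx => le_trans hx₂ hx.1
  set T : Set ℝ := {x | x ∈ Set.Icc x₂ x₁ ∧ g x = l x} with hTdef
  have hTne : T.Nonempty := ⟨x₁, ⟨le_of_lt hx₁₂, le_refl _⟩, h₁⟩
  have hTbdd : BddBelow T := ⟨x₂, fun x hx => hx.1.1⟩
  have hTcl : IsClosed T := by
    have hc : ContinuousOn (fun x => g x - l x) (Set.Icc x₂ x₁) :=
      (hgc.mono hsub).sub (hlc.mono hsub)
    have hTeq : T = Set.Icc x₂ x₁ ∩ (fun x => g x - l x) ⁻¹' {0} := by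
      ext x; simp [hTdef, sub_eq_zero]
    rw [hTeq]
    exact hc.preimage_isClosed_of_isClosed isClosed_Icc isClosed_singleton
  set x₀ := sInf T with hx₀def
  have hx₀T : x₀ ∈ T := hTcl.csInf_mem hTne hTbdd
  obtain ⟨⟨hx₂x₀le, hx₀x₁⟩, hgl₀⟩ := hx₀T
  have hx₂x₀ : x₂ < x₀ :=
    lt_of_le_of_ne hx₂x₀le (by
      intro h; rw [← h] at hgl₀; exact absurd hgl₀ (ne_of_lt h₂))
  have hRx₀ : R < x₀ := lt_of_le_of_lt hx₂ hx₂x₀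
  have hx₀pos : 0 < x₀ := lt_of_le_of_lt hR hRx₀
  have hlx₀pos : 0 < l x₀ := hlpos x₀ (le_of_lt hRx₀)
  -- below x₀ we have g ≤ l
  have hbelow : ∀ x ∈ Set.Ico x₂ x₀, g x ≤ l x := by
    intro x hx
    by_contra hcon
    push_neg at hcon
    have hxx₁ : x ≤ x₁ := le_of_lt (lt_of_lt_of_le hx.2 hx₀x₁)
    have hsub' : Set.Icc x₂ x ⊆ Set.Ici R := fun y hy => le_trans hx₂ hy.1
    have hc : ContinuousOn (fun y => g y - l y) (Set.Icc x₂ x) :=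
      (hgc.mono hsub').sub (hlc.mono hsub')
    have h0 : (0:ℝ) ∈ Set.Icc (g x₂ - l x₂) (g x - l x) :=
      ⟨le_of_lt (sub_neg.mpr h₂), le_of_lt (sub_pos.mpr hcon)⟩
    obtain ⟨c, hc1, hc2⟩ := intermediate_value_Icc hx.1 hc h0
    have hcT : c ∈ T := ⟨⟨hc1.1, le_trans hc1.2 hxx₁⟩, sub_eq_zero.mp hc2⟩
    have : x₀ ≤ c := csInf_le hTbdd hcT
    have : c < x₀ := lt_of_le_of_lt hc1.2 hx.2
    linarith
  -- derivative of log l(exp X) at X₀ := log x₀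
  have hld : DifferentiableAt ℝ l x₀ := by
    have h1 : DifferentiableWithinAt ℝ l (Set.Ici R) x₀ :=
      (hlsmooth.differentiableOn (by simp)) x₀ (mem_Ici.mpr (le_of_lt hRx₀))
    exact h1.differentiableAt (Ici_mem_nhds hRx₀)
  set α := x₀ * deriv l x₀ / l x₀ with hα
  set X₀ := Real.log x₀ with hX₀def
  have hexpX₀ : Real.exp X₀ = x₀ := Real.exp_log hx₀pos
  set L : ℝ → ℝ := fun X => Real.log (l (Real.exp X)) with hLdef
  set F : ℝ → ℝ := fun X => Real.log (g (Real.exp X)) with hFdef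
  have hLderiv : HasDerivAt L α X₀ := by
    have h1 : HasDerivAt Real.exp x₀ X₀ := by
      simpa [hexpX₀] using Real.hasDerivAt_exp X₀
    have h2' : HasDerivAt l (deriv l x₀) (Real.exp X₀) := hexpX₀ ▸ hld.hasDerivAt
    have h2 := h2'.comp X₀ h1
    have h3 : HasDerivAt Real.log (l x₀)⁻¹ (l (Real.exp X₀)) := by
      rw [hexpX₀]; exact Real.hasDerivAt_log (ne_of_gt hlx₀pos)
    have h4 := h3.comp X₀ h2
    have heq : (l x₀)⁻¹ * (deriv l x₀ * x₀) = α := by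
      rw [hα]; field_simp
    have : HasDerivAt (fun X => Real.log (l (Real.exp X))) α X₀ := by
      rw [← heq]; exact h4
    exact this
  -- key pointwise bound
  have hkey : ∀ x, x₀ < x → l x₀ * (x / x₀) ^ α ≤ g x := by
    intro x hx
    have hxpos : 0 < x := lt_trans hx₀pos hx
    have hxR : R ≤ x := le_of_lt (lt_trans hRx₀ hx)
    set X := Real.log x with hXdef
    have hexpX : Real.exp X = x := Real.exp_log hxpos
    have hXX₀ : X₀ < X := Real.log_lt_log hx₀pos hx
    set s := (F X - F X₀) / (X - X₀) with hs
    have hαs : α ≤ s := by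
      have htend : Tendsto (slope L X₀) (𝓝[<] X₀) (𝓝 α) :=
        (hasDerivAt_iff_tendsto_slope.mp hLderiv).mono_left
          (nhdsWithin_mono _ fun y hy => ne_of_lt hy)
      refine le_of_tendsto htend ?_
      have hev1 : ∀ᶠ X' in 𝓝[<] X₀, x₂ < Real.exp X' := by
        have ht : Tendsto Real.exp (𝓝[<] X₀) (𝓝 x₀) := by
          rw [← hexpX₀]
          exact (Real.continuous_exp.tendsto X₀).mono_left nhdsWithin_le_nhds
        exact ht.eventually (eventually_gt_nhds hx₂x₀)
      filter_upwards [hev1, self_mem_nhdsWithin] with X' hX'x₂ hX'lt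
      replace hX'lt : X' < X₀ := hX'lt
      have hx'pos : 0 < Real.exp X' := Real.exp_pos X'
      have hx'lt : Real.exp X' < x₀ := by
        rw [← hexpX₀]; exact Real.exp_lt_exp.mpr hX'lt
      have hx'R : R ≤ Real.exp X' := le_trans hx₂ (le_of_lt hX'x₂)
      have hgl' : g (Real.exp X') ≤ l (Real.exp X') :=
        hbelow _ ⟨le_of_lt hX'x₂, hx'lt⟩
      have hF' : F X' ≤ L X' := Real.log_le_log (hgpos _ hx'R) hgl'
      have hFL₀ : F X₀ = L X₀ := by simp [hFdef, hLdef, hexpX₀, hgl₀]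
      have hd : (0:ℝ) < X₀ - X' := sub_pos.mpr hX'lt
      have hslope : (F X₀ - F X') / (X₀ - X') ≤ s := by
        have hmem' : X' ∈ Real.exp ⁻¹' Set.Ici R := by
          simpa using hx'R
        have hmemX : X ∈ Real.exp ⁻¹' Set.Ici R := by
          simp only [Set.mem_preimage, Set.mem_Ici, hexpX]; exact hxR
        exact hgconv.slope_mono_adjacent hmem' hmemX hX'lt hXX₀
      calc slope L X₀ X' = (L X₀ - L X') / (X₀ - X') := by
              rw [slope_def_field, div_eq_div_iff (by linarith) (ne_of_gt hd)]
              ring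
        _ ≤ (F X₀ - F X') / (X₀ - X') := by
              exact div_le_div_of_nonneg_right (by linarith) (le_of_lt hd)
        _ ≤ s := hslope
    have hpos : (0:ℝ) < X - X₀ := sub_pos.mpr hXX₀
    have hFineq : F X₀ + α * (X - X₀) ≤ F X := by
      have hm := mul_le_mul_of_nonneg_right hαs (le_of_lt hpos)
      rw [hs, div_mul_cancel₀ _ (ne_of_gt hpos)] at hm
      linarith
    have hgx : Real.exp (F X) = g x := by
      rw [hFdef]; simp only [hexpX]; exact Real.exp_log (hgpos x hxR)
    have hFX₀ : F X₀ = Real.log (l x₀) := by simp [hFdef, hexpX₀, hgl₀]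
    have hrw : l x₀ * (x / x₀) ^ α = Real.exp (F X₀ + α * (X - X₀)) := by
      rw [Real.exp_add, hFX₀, Real.exp_log hlx₀pos]
      congr 1
      rw [Real.rpow_def_of_pos (div_pos hxpos hx₀pos),
        Real.log_div (ne_of_gt hxpos) (ne_of_gt hx₀pos), ← hXdef, ← hX₀def]
      ring
    calc l x₀ * (x / x₀) ^ α = Real.exp (F X₀ + α * (X - X₀)) := hrw
      _ ≤ Real.exp (F X) := Real.exp_le_exp.mpr hFineq
      _ = g x := hgx
  refine ⟨x₀, ⟨hx₂x₀, hx₀x₁⟩, hgl₀, ?_⟩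
  rw [Sfun]
  refine lintegral_mono_ae ?_
  filter_upwards [self_mem_ae_restrict measurableSet_Ioi] with x hx
  have hx' : x₀ < x := hx
  have hlx : 0 < l x := hlpos x (le_of_lt (lt_trans hRx₀ hx'))
  apply ENNReal.ofReal_le_ofReal
  rw [div_mul_eq_mul_div, ← hα]
  exact (div_le_div_iff_of_pos_right hlx).mpr (hkey x hx')
end

section
/- Let R ≥ 0 and let λ be a positive, increasing, smooth function on [R, ∞) such that liminf_{x→∞} S(x, λ) > 0. If g is a positive differentiable function on [R, ∞) such that log g(x) is a convex function of log x and ∫_R^∞ g(x)·λ(x)^{−1} dx < ∞, then lim_{x→∞} g(x)·λ(x)^{−1} = 0. -/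
open MeasureTheory Real Set Filter

/-- Theorem: if `liminf_{x→∞} S(x,λ) > 0` and `g` is positive, differentiable,
log-convex in `log x`, with `∫_R^∞ g(x) λ(x)^{−1} dx < ∞`, then
`g(x)/λ(x) → 0` as `x → ∞`. -/
theorem logconvex_integrable_tendsto_zero
    (R : ℝ) (hR : 0 ≤ R)
    (l g : ℝ → ℝ)
    (hlpos : ∀ x ∈ Set.Ici R, 0 < l x)
    (hlmono : MonotoneOn l (Set.Ici R))
    (hlsmooth : ContDiffOn ℝ (⊤ : ℕ∞) l (Set.Ici R))
    (hS : 0 < Filter.liminf (fun x => Sfun l x) Filter.atTop)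
    (hgpos : ∀ x ∈ Set.Ici R, 0 < g x)
    (hgdiff : DifferentiableOn ℝ g (Set.Ici R))
    (hgconv : ConvexOn ℝ (Real.exp ⁻¹' Set.Ici R) (fun X => Real.log (g (Real.exp X))))
    (hint : (∫⁻ x in Set.Ioi R, ENNReal.ofReal (g x / l x)) < ⊤) :
    Filter.Tendsto (fun x => g x / l x) Filter.atTop (nhds 0) := by
  -- Basic differentiability facts
  have hld : DifferentiableOn ℝ l (Set.Ici R) := hlsmooth.differentiableOn (by simp)
  have hgD : ∀ x, R < x → HasDerivAt g (deriv g x) x := fun x hx =>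
    ((hgdiff x hx.le).differentiableAt (Ici_mem_nhds hx)).hasDerivAt
  have hlD : ∀ x, R < x → HasDerivAt l (deriv l x) x := fun x hx =>
    ((hld x hx.le).differentiableAt (Ici_mem_nhds hx)).hasDerivAt
  -- Key 1: log-convexity lower bound
  have key1 : ∀ x₀, R < x₀ → ∀ x, x₀ ≤ x →
      g x₀ * (x / x₀) ^ (x₀ * deriv g x₀ / g x₀) ≤ g x := by
    intro x₀ hx₀ x hx
    have hx₀0 : 0 < x₀ := lt_of_le_of_lt hR hx₀
    have hg₀ : 0 < g x₀ := hgpos x₀ hx₀.le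
    rcases eq_or_lt_of_le hx with rfl | hlt
    · simp [div_self (ne_of_gt hx₀0)]
    · have hx0 : 0 < x := hx₀0.trans hlt
      have hgx : 0 < g x := hgpos x (hx₀.trans hlt).le
      have hgd'' : HasDerivAt g (deriv g x₀) (Real.exp (Real.log x₀)) := by
        rw [Real.exp_log hx₀0]; exact hgD x₀ hx₀
      have hcomp := hgd''.comp (Real.log x₀) (Real.hasDerivAt_exp _)
      have hgne : g (Real.exp (Real.log x₀)) ≠ 0 := by
        rw [Real.exp_log hx₀0]; exact ne_of_gt hg₀
      have hF := hcomp.log hgne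
      simp only [Function.comp_apply, Function.comp] at hF
      rw [Real.exp_log hx₀0] at hF
      have hm₀ : Real.log x₀ ∈ Real.exp ⁻¹' Set.Ici R := by
        simp only [Set.mem_preimage, Set.mem_Ici, Real.exp_log hx₀0]
        exact hx₀.le
      have hm : Real.log x ∈ Real.exp ⁻¹' Set.Ici R := by
        simp only [Set.mem_preimage, Set.mem_Ici, Real.exp_log hx0]
        exact (hx₀.trans hlt).le
      have hXX : Real.log x₀ < Real.log x := Real.log_lt_log hx₀0 hlt
      have hslope := hgconv.le_slope_of_hasDerivWithinAt_Ioi hm₀ hm hXX hF.hasDerivWithinAt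
      rw [slope_def_field] at hslope
      rw [Real.exp_log hx₀0, Real.exp_log hx0] at hslope
      have hden : 0 < Real.log x - Real.log x₀ := sub_pos.2 hXX
      rw [le_div_iff₀ hden] at hslope
      have hrp : 0 < (x / x₀ : ℝ) ^ (x₀ * deriv g x₀ / g x₀) :=
        Real.rpow_pos_of_pos (div_pos hx0 hx₀0) _
      have hpos : 0 < g x₀ * (x / x₀) ^ (x₀ * deriv g x₀ / g x₀) := mul_pos hg₀ hrp
      have hlog : Real.log (g x₀ * (x / x₀) ^ (x₀ * deriv g x₀ / g x₀)) ≤ Real.log (g x) := by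
        rw [Real.log_mul (ne_of_gt hg₀) (ne_of_gt hrp),
          Real.log_rpow (div_pos hx0 hx₀0), Real.log_div (ne_of_gt hx0) (ne_of_gt hx₀0)]
        have hdd : x₀ * deriv g x₀ / g x₀ = deriv g x₀ * x₀ / g x₀ := by ring
        rw [hdd]
        linarith [hslope]
      have := Real.exp_le_exp.2 hlog
      rwa [Real.exp_log hpos, Real.exp_log hgx] at this
  -- Key 2: at points where the logarithmic derivative of g dominates that of l
  have key2 : ∀ x₀, R < x₀ → g x₀ * deriv l x₀ ≤ deriv g x₀ * l x₀ →
      ENNReal.ofReal (g x₀ / l x₀) * Sfun l x₀ ≤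
        ∫⁻ t in Set.Ioi x₀, ENNReal.ofReal (g t / l t) := by
    intro x₀ hx₀ hA
    have hx₀0 : 0 < x₀ := lt_of_le_of_lt hR hx₀
    have hg₀ : 0 < g x₀ := hgpos x₀ hx₀.le
    have hl₀ : 0 < l x₀ := hlpos x₀ hx₀.le
    rw [Sfun, ← lintegral_const_mul' _ _ ENNReal.ofReal_ne_top]
    refine lintegral_mono_ae ((ae_restrict_iff' measurableSet_Ioi).2
      (Filter.Eventually.of_forall fun x hx => ?_))
    have hxx : x₀ < x := hx
    have hx0 : 0 < x := hx₀0.trans hxx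
    have hgx : 0 < g x := hgpos x (hx₀.trans hxx).le
    have hlx : 0 < l x := hlpos x (hx₀.trans hxx).le
    rw [← ENNReal.ofReal_mul (div_pos hg₀ hl₀).le]
    apply ENNReal.ofReal_le_ofReal
    have hb1 : (1:ℝ) ≤ x / x₀ := (one_le_div hx₀0).2 hxx.le
    have hβα : x₀ * deriv l x₀ / l x₀ ≤ x₀ * deriv g x₀ / g x₀ := by
      rw [div_le_div_iff₀ hl₀ hg₀]
      nlinarith [hx₀0]
    have hr : (x/x₀) ^ (x₀ * deriv l x₀ / l x₀) ≤ (x/x₀) ^ (x₀ * deriv g x₀ / g x₀) :=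
      Real.rpow_le_rpow_of_exponent_le hb1 hβα
    have hkey := key1 x₀ hx₀ x hxx.le
    calc g x₀ / l x₀ * (l x₀ / l x * (x / x₀) ^ (x₀ * deriv l x₀ / l x₀))
        = g x₀ * (x / x₀) ^ (x₀ * deriv l x₀ / l x₀) / l x := by
          field_simp
      _ ≤ g x₀ * (x / x₀) ^ (x₀ * deriv g x₀ / g x₀) / l x := by gcongr
      _ ≤ g x / l x := by gcongr
  -- Tail integral setup
  set T : ℝ → ENNReal := fun y => ∫⁻ t in Set.Ioi y, ENNReal.ofReal (g t / l t) with hT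
  set ν : Measure ℝ :=
    (volume.restrict (Set.Ioi R)).withDensity (fun t => ENNReal.ofReal (g t / l t)) with hν
  have hνT : ∀ y, R ≤ y → ν (Set.Ioi y) = T y := by
    intro y hy
    rw [hν, withDensity_apply _ measurableSet_Ioi,
      Measure.restrict_restrict measurableSet_Ioi,
      Set.inter_eq_self_of_subset_left (Set.Ioi_subset_Ioi hy)]
  have hTfin : ∀ y, R ≤ y → T y < ⊤ := fun y hy =>
    lt_of_le_of_lt (lintegral_mono_set (Set.Ioi_subset_Ioi hy)) hint
  -- tail tends to zero along ℕ
  have htail : Tendsto (fun n : ℕ => ν (Set.Ioi (R + n))) atTop (nhds 0) := by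
    have hempty : (⋂ n : ℕ, Set.Ioi (R + (n:ℝ))) = ∅ := by
      ext x
      simp only [Set.mem_iInter, Set.mem_Ioi, Set.mem_empty_iff_false, iff_false, not_forall,
        not_lt]
      obtain ⟨n, hn⟩ := exists_nat_gt (x - R)
      exact ⟨n, by linarith⟩
    have := tendsto_measure_iInter_atTop (μ := ν) (s := fun n : ℕ => Set.Ioi (R + n))
      (fun n => measurableSet_Ioi.nullMeasurableSet)
      (fun m n hmn => Set.Ioi_subset_Ioi (by exact_mod_cast add_le_add_right (Nat.cast_le.2 hmn) R))
      ⟨0, by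
        simp only [Nat.cast_zero, add_zero]
        rw [hνT R le_rfl]
        exact (hTfin R le_rfl).ne⟩
    rwa [hempty, measure_empty] at this
  -- liminf constant
  set L := Filter.liminf (fun x => Sfun l x) Filter.atTop with hL
  set c : ENNReal := min L 1 / 2 with hc
  have hm0 : min L 1 ≠ 0 := by
    simp only [ne_eq, min_eq_iff]
    rintro (⟨h1, -⟩ | ⟨h1, -⟩)
    · exact absurd h1 (ne_of_gt hS)
    · exact one_ne_zero h1
  have hc0 : c ≠ 0 := (ENNReal.half_pos hm0).ne'
  have hcT : c ≠ ⊤ := by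
    have : c ≤ 1 / 2 := by
      rw [hc]
      exact ENNReal.div_le_div_right (min_le_right _ _) 2
    exact ne_top_of_le_ne_top (by norm_num) this
  have hclt : c < L := lt_of_lt_of_le
    (ENNReal.half_lt_self hm0 (ne_top_of_le_ne_top ENNReal.one_ne_top (min_le_right _ _)))
    (min_le_left _ _)
  have hSev : ∀ᶠ x in atTop, c < Sfun l x := Filter.eventually_lt_of_lt_liminf hclt
  obtain ⟨Xs, hXs⟩ := eventually_atTop.1 hSev
  -- continuity of g/l on [R, ∞)
  have hfc : ContinuousOn (fun y => g y / l y) (Set.Ici R) :=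
    hgdiff.continuousOn.div hlsmooth.continuousOn (fun x hx => ne_of_gt (hlpos x hx))
  -- Main claim: for every ε > 0, eventually g x / l x ≤ ε
  have claim : ∀ ε : ℝ, 0 < ε → ∀ᶠ x in atTop, g x / l x ≤ ε := by
    intro ε hε
    have hεc : (0:ENNReal) < ENNReal.ofReal ε * c :=
      ENNReal.mul_pos (ENNReal.ofReal_pos.2 hε).ne' hc0
    obtain ⟨n, hn⟩ := (htail.eventually_lt_const hεc).exists
    set X₂ : ℝ := max (R + n) (max Xs (R + 1)) with hX₂
    have hX₂R : R < X₂ :=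
      lt_of_lt_of_le (lt_add_one R) ((le_max_right Xs (R+1)).trans (le_max_right _ _))
    -- points where the log-derivative of g dominates are small
    have hA : ∀ x, X₂ ≤ x → g x * deriv l x ≤ deriv g x * l x → g x / l x ≤ ε := by
      intro x hx hAx
      have hRx : R < x := lt_of_lt_of_le hX₂R hx
      have hchain : ENNReal.ofReal (g x / l x) * c ≤ ENNReal.ofReal ε * c := by
        calc ENNReal.ofReal (g x / l x) * c
            ≤ ENNReal.ofReal (g x / l x) * Sfun l x :=
              mul_le_mul_right (hXs x ((le_max_left Xs (R+1)).trans
                ((le_max_right (R+n) _).trans hx))).le _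
          _ ≤ T x := key2 x hRx hAx
          _ = ν (Set.Ioi x) := (hνT x hRx.le).symm
          _ ≤ ν (Set.Ioi (R + n)) :=
              measure_mono (Set.Ioi_subset_Ioi ((le_max_left (R+n) _).trans hx))
          _ ≤ ENNReal.ofReal ε * c := hn.le
      have := (ENNReal.mul_le_mul_iff_left hc0 hcT).1 hchain
      exact (ENNReal.ofReal_le_ofReal_iff hε.le).1 this
    -- now suppose not eventually small
    by_contra hcon
    rw [Filter.not_eventually] at hcon
    have hbig : ∀ t, X₂ ≤ t → ε < g t / l t := by
      intro t ht
      obtain ⟨x, hxt, hfx⟩ := Filter.frequently_atTop.1 hcon t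
      push_neg at hfx
      -- show ε < g s / l s for all s ∈ [X₂, x]
      have hall : ∀ s ∈ Set.Icc X₂ x, ε < g s / l s := by
        by_contra hns
        push_neg at hns
        obtain ⟨t₀, ht₀, ht₀le⟩ := hns
        set sset : Set ℝ := Set.Icc X₂ x ∩ (fun y => g y / l y) ⁻¹' Set.Iic ε with hsset
        have hsub : Set.Icc X₂ x ⊆ Set.Ici R := fun s hs => (hX₂R.le.trans hs.1)
        have hsne : sset.Nonempty := ⟨t₀, ht₀, ht₀le⟩
        have hsbd : BddAbove sset := (bddAbove_Icc).mono (Set.inter_subset_left)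
        have hscl : IsClosed sset :=
          (hfc.mono hsub).preimage_isClosed_of_isClosed isClosed_Icc isClosed_Iic
        have hu := hscl.csSup_mem hsne hsbd
        set u := sSup sset with hudef
        have hu1 : u ∈ Set.Icc X₂ x := hu.1
        have huf : g u / l u ≤ ε := hu.2
        have hux : u < x := by
          rcases lt_or_eq_of_le hu1.2 with h | h
          · exact h
          · rw [h] at huf; linarith
        have hanti : StrictAntiOn (fun y => g y / l y) (Set.Icc u x) := by
          have hsub2 : Set.Icc u x ⊆ Set.Ici R := fun s hs =>
            (hX₂R.le.trans (hu1.1.trans hs.1))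
          refine strictAntiOn_of_deriv_neg (convex_Icc u x) (hfc.mono hsub2) ?_
          intro t ht
          rw [interior_Icc] at ht
          have htX₂ : X₂ < t := lt_of_le_of_lt hu1.1 ht.1
          have htR : R < t := hX₂R.trans htX₂
          have htf : ε < g t / l t := by
            by_contra hle
            push_neg at hle
            have htmem : t ∈ sset := ⟨⟨htX₂.le, ht.2.le⟩, hle⟩
            have : t ≤ u := le_csSup hsbd htmem
            linarith [ht.1]
          have hP : deriv g t * l t < g t * deriv l t := by
            by_contra hge
            push_neg at hge
            exact absurd (hA t htX₂.le hge) (not_le.2 htf)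
          have hder : HasDerivAt (fun y => g y / l y)
              ((deriv g t * l t - g t * deriv l t) / (l t)^2) t :=
            (hgD t htR).div (hlD t htR) (ne_of_gt (hlpos t htR.le))
          rw [hder.deriv]
          exact div_neg_of_neg_of_pos (sub_neg.2 hP) (pow_pos (hlpos t htR.le) 2)
        have hfxu := hanti ⟨le_refl u, hux.le⟩ ⟨hux.le, le_refl x⟩ hux
        have hufε := huf
        simp only at hfxu
        linarith
      exact hall t ⟨ht, hxt⟩
    -- contradiction with finiteness of the tail integral
    have hTtop : (⊤:ENNReal) ≤ T X₂ := by
      have h1 : ENNReal.ofReal ε * volume (Set.Ioi X₂) ≤ T X₂ := by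
        rw [← setLIntegral_const (Set.Ioi X₂) (ENNReal.ofReal ε)]
        refine lintegral_mono_ae ((ae_restrict_iff' measurableSet_Ioi).2
          (Filter.Eventually.of_forall fun t htt => ?_))
        exact ENNReal.ofReal_le_ofReal (hbig t (le_of_lt htt)).le
      rw [Real.volume_Ioi, ENNReal.mul_top (ENNReal.ofReal_pos.2 hε).ne'] at h1
      exact h1
    exact absurd (top_le_iff.1 hTtop) (hTfin X₂ hX₂R.le).ne
  -- conclude
  rw [Metric.tendsto_atTop]
  intro ε hε
  obtain ⟨N, hN⟩ := eventually_atTop.1 (claim (ε/2) (half_pos hε))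
  refine ⟨max N R, fun x hx => ?_⟩
  have hxR : R ≤ x := (le_max_right N R).trans hx
  have h1 : g x / l x ≤ ε/2 := hN x ((le_max_left N R).trans hx)
  have h2 : 0 < g x / l x := div_pos (hgpos x hxR) (hlpos x hxR)
  rw [Real.dist_eq, sub_zero, abs_of_pos h2]
  linarith
end

section
/- Let α > 0 and let λ(x) = e^{α x²}. Then liminf_{x₀→∞} S(x₀, λ) > 0; in fact there exist a constant c > 0 and X > 0 such that S(x₀, λ) ≥ c for all x₀ ≥ X. -/
open MeasureTheory Real Set Filter

lemma Sfun_exp_lower (α : ℝ) (hα : 0 < α) (x₀ : ℝ) (hx₀ : 1 ≤ x₀) :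
    ENNReal.ofReal (Real.exp (-3 * α)) ≤ Sfun (fun x => Real.exp (α * x ^ 2)) x₀ := by
  have hx₀pos : 0 < x₀ := lt_of_lt_of_le one_pos hx₀
  set l : ℝ → ℝ := fun x => Real.exp (α * x ^ 2) with hl
  -- derivative
  have hder : HasDerivAt l (Real.exp (α * x₀ ^ 2) * (α * (2 * x₀ ^ 1))) x₀ := by
    exact (((hasDerivAt_pow 2 x₀).const_mul α).exp).congr_deriv (by ring)
  have hD : x₀ * deriv l x₀ / l x₀ = 2 * α * x₀ ^ 2 := by
    rw [hder.deriv]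
    simp only [hl]
    field_simp [Real.exp_ne_zero]
  -- pointwise lower bound on Ioo x₀ (x₀+1)
  have hpt : ∀ x ∈ Set.Ioo x₀ (x₀ + 1),
      ENNReal.ofReal (Real.exp (-3 * α)) ≤
        ENNReal.ofReal ((l x₀ / l x) * (x / x₀) ^ (x₀ * deriv l x₀ / l x₀)) := by
    intro x hx
    obtain ⟨hx1, hx2⟩ := hx
    have hxpos : 0 < x := lt_trans hx₀pos hx1
    have hq : 0 < x / x₀ := div_pos hxpos hx₀pos
    rw [hD]
    apply ENNReal.ofReal_le_ofReal
    rw [Real.rpow_def_of_pos hq]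
    simp only [hl]
    rw [div_eq_mul_inv, ← Real.exp_neg, ← Real.exp_add, ← Real.exp_add]
    apply Real.exp_le_exp.mpr
    -- log lower bound
    have hlog : (x - x₀) / x ≤ Real.log (x / x₀) := by
      have h := Real.one_sub_inv_le_log_of_pos hq
      have : (x / x₀)⁻¹ = x₀ / x := by
        rw [inv_div]
      rw [this] at h
      have he : 1 - x₀ / x = (x - x₀) / x := by
        field_simp
      linarith [he ▸ h]
    have hc : 0 ≤ 2 * α * x₀ ^ 2 := by positivity
    have h2 : (x - x₀) / x * (2 * α * x₀ ^ 2) ≤ Real.log (x / x₀) * (2 * α * x₀ ^ 2) :=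
      mul_le_mul_of_nonneg_right hlog hc
    have h3 : -3 * α - (α * x₀ ^ 2 + -(α * x ^ 2)) ≤ (x - x₀) * (2 * α * x₀ ^ 2) / x := by
      rw [div_eq_mul_inv, ← sub_nonneg]
      have hkey : 0 ≤ (3 * x - (x - x₀) ^ 2 * (x + 2 * x₀)) * α := by
        have h4 : (x - x₀) ^ 2 * (x + 2 * x₀) ≤ 3 * x := by
          have hs0 : 0 ≤ x - x₀ := by linarith
          have hterm : 0 ≤ (1 - (x - x₀)) * (1 + (x - x₀)) * (x + 2 * x₀) := by
            apply mul_nonneg (mul_nonneg (by linarith) (by linarith)) (by linarith)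
          nlinarith [hterm, hs0]
        nlinarith
      have hxne : x ≠ 0 := ne_of_gt hxpos
      have goal' : 0 ≤ ((x - x₀) * (2 * α * x₀ ^ 2) - (-3 * α - (α * x₀ ^ 2 + -(α * x ^ 2))) * x) * x⁻¹ := by
        apply mul_nonneg _ (inv_nonneg.mpr hxpos.le)
        nlinarith [hkey, hxpos]
      calc (0:ℝ) ≤ ((x - x₀) * (2 * α * x₀ ^ 2) - (-3 * α - (α * x₀ ^ 2 + -(α * x ^ 2))) * x) * x⁻¹ := goal'
        _ = (x - x₀) * (2 * α * x₀ ^ 2) * x⁻¹ - (-3 * α - (α * x₀ ^ 2 + -(α * x ^ 2))) := by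
            field_simp
    have he2 : (x - x₀) / x * (2 * α * x₀ ^ 2) = (x - x₀) * (2 * α * x₀ ^ 2) / x := by ring
    rw [he2] at h2
    -- goal: -3 * α ≤ α * x₀ ^ 2 + -(α * x ^ 2) + log (x/x₀) * (2*α*x₀^2)
    linarith
  -- measurability of integrand
  have hmeas : Measurable (fun x =>
      ENNReal.ofReal ((l x₀ / l x) * (x / x₀) ^ (x₀ * deriv l x₀ / l x₀))) := by
    apply Measurable.ennreal_ofReal
    apply Measurable.mul
    · exact measurable_const.div ((measurable_id.pow_const 2).const_mul α).exp
    · exact ((continuous_id.div_const x₀).rpow_const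
        (fun x => Or.inr (by rw [hD]; positivity))).measurable
  calc ENNReal.ofReal (Real.exp (-3 * α))
      = ENNReal.ofReal (Real.exp (-3 * α)) * volume (Set.Ioo x₀ (x₀ + 1)) := by
        rw [Real.volume_Ioo]
        simp
    _ = ∫⁻ _ in Set.Ioo x₀ (x₀ + 1), ENNReal.ofReal (Real.exp (-3 * α)) := by
        rw [MeasureTheory.setLIntegral_const]
    _ ≤ ∫⁻ x in Set.Ioo x₀ (x₀ + 1),
          ENNReal.ofReal ((l x₀ / l x) * (x / x₀) ^ (x₀ * deriv l x₀ / l x₀)) :=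
        MeasureTheory.setLIntegral_mono hmeas hpt
    _ ≤ Sfun l x₀ := MeasureTheory.lintegral_mono_set Set.Ioo_subset_Ioi_self

/-- For `λ(x) = e^{αx²}` with `α > 0`, `liminf_{x₀→∞} S(x₀,λ) > 0`; in fact
`S(x₀,λ) ≥ c > 0` for all sufficiently large `x₀`. -/
theorem Sfun_exp_liminf_pos (α : ℝ) (hα : 0 < α) :
    0 < Filter.liminf (fun x₀ => Sfun (fun x => Real.exp (α * x ^ 2)) x₀) Filter.atTop ∧
    ∃ c : ℝ, 0 < c ∧ ∃ X : ℝ, 0 < X ∧ ∀ x₀ ≥ X,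
      ENNReal.ofReal c ≤ Sfun (fun x => Real.exp (α * x ^ 2)) x₀ := by
  constructor
  · have h1 : (fun _ : ℝ => ENNReal.ofReal (Real.exp (-3 * α))) ≤ᶠ[Filter.atTop]
        (fun x₀ => Sfun (fun x => Real.exp (α * x ^ 2)) x₀) := by
      filter_upwards [Filter.eventually_ge_atTop (1 : ℝ)] with x₀ hx₀
      exact Sfun_exp_lower α hα x₀ hx₀
    have h2 := Filter.liminf_le_liminf h1
    rw [Filter.liminf_const] at h2
    exact lt_of_lt_of_le (ENNReal.ofReal_pos.mpr (Real.exp_pos _)) h2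
  · exact ⟨Real.exp (-3 * α), Real.exp_pos _, 1, one_pos,
      fun x₀ hx₀ => Sfun_exp_lower α hα x₀ hx₀⟩
end

section
/- Let 1 < p < ∞, let 0 < R < ∞, and let ω be analytic in a complex neighborhood of [0, R²]. If f is analytic in 𝔻_R and of class C¹ on the closed disc, then (R²/2)·∫₀^{2π} |f(Re^{iθ})|^p ω(R²) dθ − ∫_{𝔻_R} |z|² |f(z)|^p ω′(|z|²) dA(z) = ∫_{𝔻_R} ( (p/2)·z·f′(z) + f(z) ) · |f(z)|^{p−1} · conj(sgn f(z)) · ω(|z|²) dA(z). -/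
/-!
Write `J = |f|^{p-1} conj(sgn f)`, so that `f J = |f|^p`, and `N = |f|^p`, which is `C¹` for
`p > 1` with `dN(v) = p Re (J v)`. In polar coordinates `z = r e^{iθ}` this gives
`r ∂_r N = p Re (J z f')` and `∂_θ N = -p Im (J z f')`. Hence `r` times the right-hand integrand
plus `r · |z|² N ω'(|z|²)` equals `∂_r (r²/2 · N ω(r²)) - i ∂_θ (r/2 · N ω(r²))`. Integrating over
`(0, R) × (-π, π)`, the real part gives the boundary term at `r = R` and the imaginary part
vanishes by periodicity in `θ`.
-/

open MeasureTheory Real Set Filter Metric intervalIntegral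

/-- The complex signum: `sgn w = w/|w|` for `w ≠ 0` and `sgn 0 = 0`. -/
noncomputable def csgn (w : ℂ) : ℂ := if w = 0 then 0 else w / (‖w‖ : ℝ)

noncomputable def dualityMap (p : ℝ) (w : ℂ) : ℂ :=
  ((‖w‖ ^ (p - 1) : ℝ) : ℂ) * starRingEnd ℂ (csgn w)

lemma mul_conj_csgn (w : ℂ) : w * starRingEnd ℂ (csgn w) = ‖w‖ := by
  rcases eq_or_ne w 0 with rfl | hw
  · simp [csgn]
  · have hw' : (‖w‖ : ℂ) ≠ 0 := by exact_mod_cast norm_ne_zero_iff.2 hw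
    rw [csgn, if_neg hw, map_div₀, Complex.conj_ofReal, mul_div_assoc', Complex.mul_conj,
      Complex.normSq_eq_norm_sq]
    push_cast
    field_simp

lemma mul_dualityMap {p : ℝ} (hp : p ≠ 0) (w : ℂ) : w * dualityMap p w = ((‖w‖ ^ p : ℝ) : ℂ) := by
  rw [dualityMap, mul_left_comm, mul_conj_csgn, ← Complex.ofReal_mul,
    ← Real.rpow_add_one' (norm_nonneg w) (by simpa using hp), sub_add_cancel]

lemma dualityMap_eq (p : ℝ) (w : ℂ) :
    dualityMap p w = ((‖w‖ ^ (p - 2) : ℝ) : ℂ) * starRingEnd ℂ w := by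
  rcases eq_or_ne w 0 with rfl | hw
  · simp [dualityMap, csgn]
  · have hw' : (‖w‖ : ℂ) ≠ 0 := by exact_mod_cast norm_ne_zero_iff.2 hw
    rw [dualityMap, csgn, if_neg hw, map_div₀, Complex.conj_ofReal,
      show p - 1 = p - 2 + 1 by ring, Real.rpow_add_one (norm_ne_zero_iff.2 hw)]
    push_cast
    field_simp

lemma continuous_dualityMap {p : ℝ} (hp : 1 < p) : Continuous (dualityMap p) := by
  rw [continuous_iff_continuousAt]
  intro w
  rcases eq_or_ne w 0 with rfl | hw
  · have hnorm : ∀ v, ‖dualityMap p v‖ = ‖v‖ ^ (p - 1) := fun v => by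
      rw [dualityMap_eq, norm_mul, Complex.norm_real, Complex.norm_conj, Real.norm_eq_abs,
        abs_of_nonneg (by positivity), ← Real.rpow_add_one' (norm_nonneg v) (by linarith)]
      ring_nf
    have h0 : dualityMap p 0 = 0 := by simp [dualityMap, csgn]
    rw [ContinuousAt, h0, tendsto_zero_iff_norm_tendsto_zero]
    simp_rw [hnorm]
    simpa [(sub_pos.2 hp).ne'] using
      (continuousAt_id.norm.rpow_const (.inr (sub_pos.2 hp).le) (x := (0 : ℂ))).tendsto
  · simp_rw [funext (dualityMap_eq p)]
    fun_prop (discharger := simp [hw])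

lemma HasDerivAt.norm_rpow {g : ℝ → ℂ} {g' : ℂ} {t : ℝ} (hg : HasDerivAt g g' t)
    {p : ℝ} (hp : 1 < p) :
    HasDerivAt (fun s => ‖g s‖ ^ p) (p * (dualityMap p (g t) * g').re) t := by
  refine ((hasFDerivAt_norm_rpow (g t) hp).comp_hasDerivAt t hg).congr_deriv ?_
  simp only [smul_apply, coe_innerSL_apply, Complex.inner, Complex.mul_re, Complex.conj_re,
    Complex.conj_im, mul_neg, sub_neg_eq_add, smul_eq_mul, dualityMap_eq, Complex.ofReal_re,
    Complex.ofReal_im, zero_mul, neg_zero, sub_zero, Complex.mul_im, add_zero, neg_mul]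
  ring

section Rectangle

variable {a b c d : ℝ} {φ : ℝ × ℝ → ℝ}

lemma setIntegral_Ioo_prod_Ioo_eq_of_hasDerivAt_snd (hcd : c ≤ d)
    (hφ : ContinuousOn φ (Icc a b ×ˢ Icc c d)) {U : ℝ → ℝ → ℝ}
    (hUc : ∀ x ∈ Ioo a b, ContinuousOn (U x) (Icc c d))
    (hU : ∀ x ∈ Ioo a b, ∀ y ∈ Ioo c d, HasDerivAt (U x) (φ (x, y)) y) :
    ∫ q in Ioo a b ×ˢ Ioo c d, φ q = ∫ x in Ioo a b, (U x d - U x c) := by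
  have hint : IntegrableOn φ (Ioo a b ×ˢ Ioo c d) (volume.prod volume) :=
    (hφ.integrableOn_compact (isCompact_Icc.prod isCompact_Icc)).mono_set
      (prod_mono Ioo_subset_Icc_self Ioo_subset_Icc_self)
  rw [Measure.volume_eq_prod, setIntegral_prod _ hint]
  refine setIntegral_congr_fun measurableSet_Ioo fun x hx => ?_
  have hφx : ContinuousOn (fun y => φ (x, y)) (Icc c d) :=
    hφ.comp (Continuous.continuousOn (by fun_prop)) fun y hy => ⟨Ioo_subset_Icc_self hx, hy⟩
  rw [← integral_Ioc_eq_integral_Ioo, ← intervalIntegral.integral_of_le hcd]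
  exact integral_eq_sub_of_hasDerivAt_of_le hcd (hUc x hx) (hU x hx)
    (hφx.intervalIntegrable_of_Icc hcd)

lemma setIntegral_Ioo_prod_Ioo_eq_of_hasDerivAt_fst (hab : a ≤ b)
    (hφ : ContinuousOn φ (Icc a b ×ˢ Icc c d)) {V : ℝ → ℝ → ℝ}
    (hVc : ∀ y ∈ Ioo c d, ContinuousOn (V · y) (Icc a b))
    (hV : ∀ x ∈ Ioo a b, ∀ y ∈ Ioo c d, HasDerivAt (V · y) (φ (x, y)) x) :
    ∫ q in Ioo a b ×ˢ Ioo c d, φ q = ∫ y in Ioo c d, (V b y - V a y) := by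
  rw [Measure.volume_eq_prod, ← setIntegral_prod_swap, ← Measure.volume_eq_prod]
  exact setIntegral_Ioo_prod_Ioo_eq_of_hasDerivAt_snd hab
    (hφ.comp continuous_swap.continuousOn fun q hq => ⟨hq.2, hq.1⟩) hVc
    fun y hy x hx => hV x hx y hy

end Rectangle

lemma Complex.polarCoord_symm_eq_circleMap (q : ℝ × ℝ) :
    Complex.polarCoord.symm q = circleMap 0 q.1 q.2 := by
  simp [circleMap_zero, Complex.exp_mul_I]

lemma continuous_circleMap_zero_uncurry : Continuous fun q : ℝ × ℝ => circleMap 0 q.1 q.2 := by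
  simp only [circleMap_zero]
  fun_prop

lemma setIntegral_ball_eq_setIntegral_polar {E : Type*} [NormedAddCommGroup E] [NormedSpace ℝ E]
    (g : ℂ → E) (R : ℝ) :
    ∫ z in ball (0 : ℂ) R, g z = ∫ q in Ioo 0 R ×ˢ Ioo (-π) π, q.1 • g (circleMap 0 q.1 q.2) := by
  have hball : polarCoord.target ∩ (fun q : ℝ × ℝ => circleMap 0 q.1 q.2) ⁻¹' ball 0 R
      = Ioo 0 R ×ˢ Ioo (-π) π := by
    ext ⟨r, θ⟩
    simp only [polarCoord_target, mem_inter_iff, mem_prod, mem_preimage, mem_ball_zero_iff,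
      norm_circleMap_zero, mem_Ioi, mem_Ioo]
    grind [abs_of_pos]
  have hind : ∀ q : ℝ × ℝ, q.1 • (ball 0 R).indicator g (circleMap 0 q.1 q.2)
      = ((fun q : ℝ × ℝ => circleMap 0 q.1 q.2) ⁻¹' ball 0 R).indicator
          (fun q => q.1 • g (circleMap 0 q.1 q.2)) q := fun q => by
    by_cases h : circleMap 0 q.1 q.2 ∈ ball 0 R
    · rw [indicator_of_mem h, indicator_of_mem (by exact h)]
    · rw [indicator_of_notMem h, indicator_of_notMem (by exact h), smul_zero]
  rw [← MeasureTheory.integral_indicator measurableSet_ball,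
    ← Complex.integral_comp_polarCoord_symm]
  simp_rw [Complex.polarCoord_symm_eq_circleMap, hind]
  rw [setIntegral_indicator
    (measurableSet_ball.preimage continuous_circleMap_zero_uncurry.measurable), hball]

lemma hasDerivAt_circleMap_radius (c : ℂ) (r θ : ℝ) :
    HasDerivAt (fun s => circleMap c s θ) (Complex.exp (θ * Complex.I)) r := by
  simpa [circleMap] using
    ((Complex.ofRealCLM.hasDerivAt (x := r)).mul_const (Complex.exp (θ * Complex.I))).const_add c

lemma continuous_circleMap_radius (c : ℂ) (θ : ℝ) : Continuous fun r => circleMap c r θ :=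
  continuous_iff_continuousAt.2 fun r => (hasDerivAt_circleMap_radius c r θ).continuousAt

lemma circleMap_zero_mem_closedBall {r R : ℝ} (hr : r ∈ Icc 0 R) (θ : ℝ) :
    circleMap 0 r θ ∈ closedBall 0 R := by
  simpa [abs_of_nonneg hr.1] using hr.2

lemma circleMap_zero_mem_ball {r R : ℝ} (hr : r ∈ Ioo 0 R) (θ : ℝ) :
    circleMap 0 r θ ∈ ball 0 R := by
  simpa [abs_of_pos hr.1] using hr.2

lemma mapsTo_norm_sq_closedBall (R : ℝ) :
    MapsTo (fun z : ℂ => ‖z‖ ^ 2) (closedBall 0 R) (Icc 0 (R ^ 2)) :=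
  fun z hz => ⟨by positivity, pow_le_pow_left₀ (norm_nonneg z) (mem_closedBall_zero_iff.1 hz) 2⟩

noncomputable def greenIntegrand (p : ℝ) (ω ω' : ℝ → ℝ) (f F : ℂ → ℂ) (z : ℂ) : ℂ :=
  ((p / 2) * z * F z + f z) * dualityMap p (f z) * (ω (‖z‖ ^ 2) : ℂ)
    + ((‖z‖ ^ 2 * ‖f z‖ ^ p * ω' (‖z‖ ^ 2) : ℝ) : ℂ)

section GreenIntegrand

variable {p R : ℝ} {ω ω' : ℝ → ℝ} {f F : ℂ → ℂ}

lemma greenIntegrand_eq (hp : p ≠ 0) (z : ℂ) :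
    greenIntegrand p ω ω' f F z
      = (((p / 2 : ℝ) : ℂ) * (dualityMap p (f z) * (z * F z)) + ((‖f z‖ ^ p : ℝ) : ℂ))
          * (ω (‖z‖ ^ 2) : ℂ) + ((‖z‖ ^ 2 * ‖f z‖ ^ p * ω' (‖z‖ ^ 2) : ℝ) : ℂ) := by
  rw [greenIntegrand, ← mul_dualityMap hp]
  push_cast
  ring

lemma re_greenIntegrand (hp : p ≠ 0) (z : ℂ) :
    (greenIntegrand p ω ω' f F z).re
      = (p / 2 * (dualityMap p (f z) * (z * F z)).re + ‖f z‖ ^ p) * ω (‖z‖ ^ 2)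
        + ‖z‖ ^ 2 * ‖f z‖ ^ p * ω' (‖z‖ ^ 2) := by
  rw [greenIntegrand_eq hp]
  simp only [Complex.add_re, Complex.re_mul_ofReal, Complex.re_ofReal_mul, Complex.ofReal_re]

lemma im_greenIntegrand (hp : p ≠ 0) (z : ℂ) :
    (greenIntegrand p ω ω' f F z).im
      = p / 2 * (dualityMap p (f z) * (z * F z)).im * ω (‖z‖ ^ 2) := by
  rw [greenIntegrand_eq hp]
  simp only [Complex.add_im, Complex.im_mul_ofReal, Complex.im_ofReal_mul, Complex.ofReal_im,
    add_zero]

lemma hasDerivAt_radial_greenIntegrand (hp : 1 < p) {r θ : ℝ}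
    (hf : HasDerivAt f (F (circleMap 0 r θ)) (circleMap 0 r θ))
    (hω : HasDerivAt ω (ω' (r ^ 2)) (r ^ 2)) :
    HasDerivAt (fun s => s ^ 2 / 2 * (‖f (circleMap 0 s θ)‖ ^ p * ω (s ^ 2)))
      (r * (greenIntegrand p ω ω' f F (circleMap 0 r θ)).re) r := by
  have hfr := (hf.comp r (hasDerivAt_circleMap_radius 0 r θ)).norm_rpow hp
  have hωr := HasDerivAt.comp (h := fun s : ℝ => s ^ 2) r hω (hasDerivAt_pow 2 r)
  refine (((hasDerivAt_pow 2 r).div_const 2).mul (hfr.mul hωr)).congr_deriv ?_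
  set z := circleMap 0 r θ with hz
  have hzF : dualityMap p (f z) * (z * F z)
      = r * (dualityMap p (f z) * (F z * Complex.exp (θ * Complex.I))) := by
    rw [hz, circleMap_zero]; ring
  rw [re_greenIntegrand (by linarith), hzF, Complex.re_ofReal_mul, norm_circleMap_zero, sq_abs]
  simp only [Function.comp_apply, Pi.mul_apply]
  ring

lemma hasDerivAt_angular_greenIntegrand (hp : 1 < p) {r θ : ℝ}
    (hf : HasDerivAt f (F (circleMap 0 r θ)) (circleMap 0 r θ)) :
    HasDerivAt (fun t => -(r / 2 * (‖f (circleMap 0 r t)‖ ^ p * ω (r ^ 2))))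
      (r * (greenIntegrand p ω ω' f F (circleMap 0 r θ)).im) θ := by
  have hfθ := (hf.comp θ (hasDerivAt_circleMap 0 r θ)).norm_rpow hp
  refine ((hfθ.mul_const _).const_mul _).neg.congr_deriv ?_
  set z := circleMap 0 r θ
  have hzF : dualityMap p (f z) * (F z * (z * Complex.I))
      = dualityMap p (f z) * (z * F z) * Complex.I := by
    ring
  simp only [Function.comp_apply]
  rw [im_greenIntegrand (by linarith), hzF, Complex.mul_I_re, norm_circleMap_zero, sq_abs]
  ring

lemma continuousOn_norm_sq_mul_norm_rpow_mul (hp : 0 ≤ p) (hfc : ContinuousOn f (closedBall 0 R))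
    (hω' : ContinuousOn ω' (Icc 0 (R ^ 2))) :
    ContinuousOn (fun z : ℂ => ‖z‖ ^ 2 * ‖f z‖ ^ p * ω' (‖z‖ ^ 2)) (closedBall 0 R) :=
  ((continuous_norm.pow 2).continuousOn.mul
    ((continuous_norm.rpow_const fun _ => Or.inr hp).comp_continuousOn hfc)).mul
    (hω'.comp (by fun_prop) (mapsTo_norm_sq_closedBall R))

lemma continuousOn_greenIntegrand (hp : 1 < p) (hfc : ContinuousOn f (closedBall 0 R))
    (hF : ContinuousOn F (closedBall 0 R)) (hω : ContinuousOn ω (Icc 0 (R ^ 2)))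
    (hω' : ContinuousOn ω' (Icc 0 (R ^ 2))) :
    ContinuousOn (greenIntegrand p ω ω' f F) (closedBall 0 R) := by
  have hωz := hω.comp (by fun_prop) (mapsTo_norm_sq_closedBall R)
  have hDf := (continuous_dualityMap hp).comp_continuousOn hfc
  exact (((((continuousOn_const.mul continuousOn_id).mul hF).add hfc).mul hDf).mul
    (Complex.continuous_ofReal.comp_continuousOn hωz)).add
    (Complex.continuous_ofReal.comp_continuousOn
      (continuousOn_norm_sq_mul_norm_rpow_mul (by linarith) hfc hω'))

lemma continuousOn_polar_greenIntegrand (hp : 1 < p) (hfc : ContinuousOn f (closedBall 0 R))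
    (hF : ContinuousOn F (closedBall 0 R)) (hω : ContinuousOn ω (Icc 0 (R ^ 2)))
    (hω' : ContinuousOn ω' (Icc 0 (R ^ 2))) :
    ContinuousOn (fun q : ℝ × ℝ => q.1 • greenIntegrand p ω ω' f F (circleMap 0 q.1 q.2))
      (Icc 0 R ×ˢ univ) :=
  continuousOn_fst.smul ((continuousOn_greenIntegrand hp hfc hF hω hω').comp
    continuous_circleMap_zero_uncurry.continuousOn fun q hq =>
      circleMap_zero_mem_closedBall hq.1 q.2)

lemma setIntegral_polar_re_greenIntegrand (hp : 1 < p) (hR : 0 ≤ R)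
    (hω : ContinuousOn ω (Icc 0 (R ^ 2))) (hdω : ∀ x ∈ Ioo 0 (R ^ 2), HasDerivAt ω (ω' x) x)
    (hω' : ContinuousOn ω' (Icc 0 (R ^ 2))) (hf : ∀ z ∈ ball 0 R, HasDerivAt f (F z) z)
    (hfc : ContinuousOn f (closedBall 0 R)) (hF : ContinuousOn F (closedBall 0 R)) :
    ∫ q in Ioo 0 R ×ˢ Ioo (-π) π, (q.1 • greenIntegrand p ω ω' f F (circleMap 0 q.1 q.2)).re
      = ∫ θ in Ioo (-π) π, R ^ 2 / 2 * (‖f (circleMap 0 R θ)‖ ^ p * ω (R ^ 2)) := by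
  have hΦ : ContinuousOn
      (fun q : ℝ × ℝ => (q.1 • greenIntegrand p ω ω' f F (circleMap 0 q.1 q.2)).re)
      (Icc 0 R ×ˢ Icc (-π) π) :=
    Complex.continuous_re.comp_continuousOn ((continuousOn_polar_greenIntegrand hp hfc hF hω
      hω').mono (prod_mono subset_rfl (subset_univ _)))
  have hV : ∀ θ : ℝ, ContinuousOn (fun r => r ^ 2 / 2 * (‖f (circleMap 0 r θ)‖ ^ p * ω (r ^ 2)))
      (Icc 0 R) := fun θ => by
    have hfθ : ContinuousOn (fun r => f (circleMap 0 r θ)) (Icc 0 R) :=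
      hfc.comp (continuous_circleMap_radius 0 θ).continuousOn
        fun r hr => circleMap_zero_mem_closedBall hr θ
    have hωr : ContinuousOn (fun r => ω (r ^ 2)) (Icc 0 R) :=
      hω.comp (continuous_pow 2).continuousOn fun r hr =>
        ⟨by positivity, pow_le_pow_left₀ hr.1 hr.2 2⟩
    exact ((continuous_pow 2).div_const 2).continuousOn.mul
      (((continuous_norm.rpow_const fun _ => Or.inr (by linarith)).comp_continuousOn hfθ).mul hωr)
  have hV' : ∀ r ∈ Ioo 0 R, ∀ θ ∈ Ioo (-π) π,
      HasDerivAt (fun r => r ^ 2 / 2 * (‖f (circleMap 0 r θ)‖ ^ p * ω (r ^ 2)))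
        (r • greenIntegrand p ω ω' f F (circleMap 0 r θ)).re r := fun r hr θ _ => by
    rw [Complex.smul_re, smul_eq_mul]
    exact hasDerivAt_radial_greenIntegrand hp (hf _ (circleMap_zero_mem_ball hr θ))
      (hdω _ ⟨by positivity [hr.1], pow_lt_pow_left₀ hr.2 hr.1.le two_ne_zero⟩)
  rw [setIntegral_Ioo_prod_Ioo_eq_of_hasDerivAt_fst hR hΦ (fun θ _ => hV θ) hV']
  simp

lemma setIntegral_polar_im_greenIntegrand (hp : 1 < p)
    (hω : ContinuousOn ω (Icc 0 (R ^ 2))) (hω' : ContinuousOn ω' (Icc 0 (R ^ 2)))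
    (hf : ∀ z ∈ ball 0 R, HasDerivAt f (F z) z) (hfc : ContinuousOn f (closedBall 0 R))
    (hF : ContinuousOn F (closedBall 0 R)) :
    ∫ q in Ioo 0 R ×ˢ Ioo (-π) π, (q.1 • greenIntegrand p ω ω' f F (circleMap 0 q.1 q.2)).im
      = 0 := by
  have hΦ : ContinuousOn
      (fun q : ℝ × ℝ => (q.1 • greenIntegrand p ω ω' f F (circleMap 0 q.1 q.2)).im)
      (Icc 0 R ×ˢ Icc (-π) π) :=
    Complex.continuous_im.comp_continuousOn ((continuousOn_polar_greenIntegrand hp hfc hF hω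
      hω').mono (prod_mono subset_rfl (subset_univ _)))
  have hU : ∀ r ∈ Ioo 0 R, ContinuousOn
      (fun θ => -(r / 2 * (‖f (circleMap 0 r θ)‖ ^ p * ω (r ^ 2)))) (Icc (-π) π) := fun r hr => by
    have hfr : ContinuousOn (fun θ => f (circleMap 0 r θ)) (Icc (-π) π) :=
      hfc.comp (continuous_circleMap 0 r).continuousOn
        fun θ _ => circleMap_zero_mem_closedBall (Ioo_subset_Icc_self hr) θ
    exact (continuousOn_const.mul
      (((continuous_norm.rpow_const fun _ => Or.inr (by linarith)).comp_continuousOn hfr).mul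
        continuousOn_const)).neg
  have hU' : ∀ r ∈ Ioo 0 R, ∀ θ ∈ Ioo (-π) π,
      HasDerivAt (fun θ => -(r / 2 * (‖f (circleMap 0 r θ)‖ ^ p * ω (r ^ 2))))
        (r • greenIntegrand p ω ω' f F (circleMap 0 r θ)).im θ := fun r hr θ _ => by
    rw [Complex.smul_im, smul_eq_mul]
    exact hasDerivAt_angular_greenIntegrand hp (hf _ (circleMap_zero_mem_ball hr θ))
  have hπ : ∀ r : ℝ, circleMap 0 r π = circleMap 0 r (-π) := fun r => by
    simpa [show -π + 2 * π = π by ring] using periodic_circleMap 0 r (-π)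
  rw [setIntegral_Ioo_prod_Ioo_eq_of_hasDerivAt_snd (by linarith [pi_pos]) hΦ hU hU']
  simp [hπ]

theorem setIntegral_ball_greenIntegrand (hp : 1 < p) (hR : 0 ≤ R)
    (hω : ContinuousOn ω (Icc 0 (R ^ 2))) (hdω : ∀ x ∈ Ioo 0 (R ^ 2), HasDerivAt ω (ω' x) x)
    (hω' : ContinuousOn ω' (Icc 0 (R ^ 2))) (hf : ∀ z ∈ ball 0 R, HasDerivAt f (F z) z)
    (hfc : ContinuousOn f (closedBall 0 R)) (hF : ContinuousOn F (closedBall 0 R)) :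
    ∫ z in ball 0 R, greenIntegrand p ω ω' f F z
      = ((R ^ 2 / 2 * ∫ θ in (0 : ℝ)..2 * π, ‖f (circleMap 0 R θ)‖ ^ p * ω (R ^ 2) : ℝ) : ℂ) := by
  have hint : IntegrableOn
      (fun q : ℝ × ℝ => q.1 • greenIntegrand p ω ω' f F (circleMap 0 q.1 q.2))
      (Ioo 0 R ×ˢ Ioo (-π) π) :=
    (((continuousOn_polar_greenIntegrand hp hfc hF hω hω').mono
      (prod_mono subset_rfl (subset_univ _))).integrableOn_compact
      (isCompact_Icc.prod isCompact_Icc)).mono_set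
      (prod_mono Ioo_subset_Icc_self Ioo_subset_Icc_self)
  have hper : Function.Periodic (fun θ => ‖f (circleMap 0 R θ)‖ ^ p * ω (R ^ 2)) (2 * π) :=
    (periodic_circleMap 0 R).comp fun z => ‖f z‖ ^ p * ω (R ^ 2)
  rw [setIntegral_ball_eq_setIntegral_polar, ← setIntegral_re_add_im hint]
  simp only [RCLike.re_to_complex, RCLike.im_to_complex]
  rw [setIntegral_polar_re_greenIntegrand hp hR hω hdω hω' hf hfc hF,
    setIntegral_polar_im_greenIntegrand hp hω hω' hf hfc hF, MeasureTheory.integral_const_mul,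
    ← integral_Ioc_eq_integral_Ioo, ← intervalIntegral.integral_of_le (by linarith [pi_pos]),
    ← zero_add (2 * π), ← hper.intervalIntegral_add_eq (-π) 0, show -π + 2 * π = π by ring]
  simp

theorem setIntegral_ball_cauchyGreen (hp : 1 < p) (hR : 0 ≤ R)
    (hω : ContinuousOn ω (Icc 0 (R ^ 2))) (hdω : ∀ x ∈ Ioo 0 (R ^ 2), HasDerivAt ω (ω' x) x)
    (hω' : ContinuousOn ω' (Icc 0 (R ^ 2))) (hf : ∀ z ∈ ball 0 R, HasDerivAt f (F z) z)
    (hfc : ContinuousOn f (closedBall 0 R)) (hF : ContinuousOn F (closedBall 0 R)) :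
    ∫ z in ball 0 R, ((p / 2) * z * F z + f z) * dualityMap p (f z) * (ω (‖z‖ ^ 2) : ℂ)
      = ((R ^ 2 / 2 * (∫ θ in (0 : ℝ)..2 * π, ‖f (circleMap 0 R θ)‖ ^ p * ω (R ^ 2))
          - ∫ z in ball 0 R, ‖z‖ ^ 2 * ‖f z‖ ^ p * ω' (‖z‖ ^ 2) : ℝ) : ℂ) := by
  have hG : IntegrableOn (greenIntegrand p ω ω' f F) (ball 0 R) :=
    ((continuousOn_greenIntegrand hp hfc hF hω hω').integrableOn_compact
      (isCompact_closedBall 0 R)).mono_set ball_subset_closedBall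
  have hcorr : IntegrableOn (fun z : ℂ => ((‖z‖ ^ 2 * ‖f z‖ ^ p * ω' (‖z‖ ^ 2) : ℝ) : ℂ))
      (ball 0 R) :=
    ((Complex.continuous_ofReal.comp_continuousOn
      (continuousOn_norm_sq_mul_norm_rpow_mul (by linarith) hfc hω')).integrableOn_compact
      (isCompact_closedBall 0 R)).mono_set ball_subset_closedBall
  calc ∫ z in ball 0 R, ((p / 2) * z * F z + f z) * dualityMap p (f z) * (ω (‖z‖ ^ 2) : ℂ)
      = ∫ z in ball 0 R, (greenIntegrand p ω ω' f F z
          - ((‖z‖ ^ 2 * ‖f z‖ ^ p * ω' (‖z‖ ^ 2) : ℝ) : ℂ)) := by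
        simp only [greenIntegrand, add_sub_cancel_right]
    _ = _ := by
        rw [integral_sub hG hcorr, setIntegral_ball_greenIntegrand hp hR hω hdω hω' hf hfc hF,
          integral_complex_ofReal, Complex.ofReal_sub]

end GreenIntegrand

lemma ContDiffOn.exists_continuousOn_hasDerivAt {f : ℂ → ℂ} {s : Set ℂ} (hs : UniqueDiffOn ℝ s)
    (hf : ContDiffOn ℝ 1 f s) :
    ∃ F : ℂ → ℂ, ContinuousOn F s ∧ ∀ z ∈ s, DifferentiableAt ℂ f z → HasDerivAt f (F z) z := by
  refine ⟨fun z => fderivWithin ℝ f s z 1,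
    (hf.continuousOn_fderivWithin hs le_rfl).clm_apply continuousOn_const, fun z hz hdz => ?_⟩
  show HasDerivAt f (fderivWithin ℝ f s z 1) z
  rw [(hdz.hasFDerivAt.restrictScalars ℝ).hasFDerivWithinAt.fderivWithin (hs z hz)]
  exact hdz.hasDerivAt

/-- The Cauchy–Green identity for `|f|^p` against the weight `ω(|z|²)`:
`(R²/2)∫₀^{2π}|f(Re^{iθ})|^p ω(R²)dθ − ∫_{𝔻_R}|z|²|f(z)|^p ω′(|z|²)dA
  = ∫_{𝔻_R}((p/2)zf′(z) + f(z))|f(z)|^{p−1} conj(sgn f(z)) ω(|z|²) dA`. -/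
theorem cauchy_green_identity_weighted
    (p R : ℝ) (hp : 1 < p) (hR : 0 < R)
    (ω : ℝ → ℝ)
    (hωan : AnalyticOnNhd ℝ ω (Set.Icc 0 (R ^ 2)))
    (f : ℂ → ℂ)
    (hf : DifferentiableOn ℂ f (Metric.ball 0 R))
    (hf1 : ContDiffOn ℝ 1 f (Metric.closedBall 0 R)) :
    ((R ^ 2 / 2 *
        (∫ θ in (0 : ℝ)..(2 * Real.pi),
          ‖f ((R : ℂ) * Complex.exp ((θ : ℂ) * Complex.I))‖ ^ p * ω (R ^ 2))
      - ∫ z in Metric.ball (0 : ℂ) R, ‖z‖ ^ 2 * ‖f z‖ ^ p * deriv ω (‖z‖ ^ 2) : ℝ) : ℂ)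
    = ∫ z in Metric.ball (0 : ℂ) R,
        (((p : ℂ) / 2) * z * deriv f z + f z) * ((‖f z‖ ^ (p - 1) : ℝ) : ℂ) *
          (starRingEnd ℂ) (csgn (f z)) * ((ω (‖z‖ ^ 2) : ℝ) : ℂ) := by
  -- `deriv f` is junk on the boundary circle; `F` extends `f'` continuously to the closed disc.
  obtain ⟨F, hFc, hfF⟩ := hf1.exists_continuousOn_hasDerivAt
    (uniqueDiffOn_convex (convex_closedBall 0 R) (by simp [interior_closedBall _ hR.ne', hR]))
  have hfd : ∀ z ∈ ball 0 R, HasDerivAt f (F z) z := fun z hz =>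
    hfF z (ball_subset_closedBall hz) (hf.differentiableAt (isOpen_ball.mem_nhds hz))
  simp only [← circleMap_zero]
  rw [← setIntegral_ball_cauchyGreen hp hR.le hωan.continuousOn
    (fun x hx => (hωan x (Ioo_subset_Icc_self hx)).differentiableAt.hasDerivAt)
    hωan.deriv.continuousOn hfd hf1.continuousOn hFc]
  refine setIntegral_congr_fun measurableSet_ball fun z hz => ?_
  rw [(hfd z hz).deriv, dualityMap]
  ring
end

section
/- Let 0 < R < ∞, let 1 ≤ q < ∞, and let ω be differentiable, positive and non-increasing on [0, R²] (being continuous from the left at R²). Then for every function g analytic in 𝔻_R, D_q(R, g; ω)^q ≤ (1/2)·(ω(0) − ω(R²))·R²·M_q(R, g)^q. -/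
/-! In polar coordinates the left-hand side is
`∫₀^R r³ (-ω'(r²)) ∫₀^{2π} |g(re^{iθ})|^q dθ dr`. Bounding the inner integral by its supremum
over `r` and `r²` by `R²` leaves `(R²/2) ∫₀^R -(d/dr) ω(r²) dr = (R²/2) (ω(0) - ω(R²))`: the
fundamental theorem of calculus applies without any regularity of `ω'`, because the derivative
of the antitone function `r ↦ ω(r²)` has a sign and is therefore integrable. -/

open MeasureTheory Real Set Filter Metric
open scoped ENNReal

theorem AntitoneOn.lintegral_ofReal_neg_deriv {φ : ℝ → ℝ} {a b : ℝ} (hab : a ≤ b)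
    (hanti : AntitoneOn φ (Icc a b)) (hcont : ContinuousOn φ (Icc a b))
    (hdiff : DifferentiableOn ℝ φ (Ioo a b)) :
    ∫⁻ t in Ioo a b, ENNReal.ofReal (-deriv φ t) = ENNReal.ofReal (φ a - φ b) := by
  have hderiv : ∀ t ∈ Ioo a b, HasDerivAt (-φ) (-deriv φ t) t := fun t ht =>
    ((hdiff t ht).differentiableAt (isOpen_Ioo.mem_nhds ht)).hasDerivAt.neg
  have hnonneg : ∀ t ∈ Ioo a b, 0 ≤ -deriv φ t := fun t ht => by
    rw [← derivWithin_of_isOpen isOpen_Ioo ht]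
    exact neg_nonneg.2 (hanti.mono Ioo_subset_Icc_self).derivWithin_nonpos
  have hint : IntegrableOn (fun t => -deriv φ t) (Ioc a b) :=
    intervalIntegral.integrableOn_deriv_of_nonneg hcont.neg hderiv hnonneg
  rw [← ofReal_integral_eq_lintegral_ofReal (hint.mono_set Ioo_subset_Ioc_self)
      ((ae_restrict_iff' measurableSet_Ioo).2 (Eventually.of_forall hnonneg)),
    integral_Ioc_eq_integral_Ioo.symm, ← intervalIntegral.integral_of_le hab,
    intervalIntegral.integral_eq_sub_of_hasDerivAt_of_le hab hcont.neg hderiv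
      ((intervalIntegrable_iff_integrableOn_Ioc_of_le hab).2 hint),
    Pi.neg_apply, Pi.neg_apply, neg_sub_neg]

theorem Function.Periodic.setLIntegral_Ioo_add_eq {f : ℝ → ℝ≥0∞} {T : ℝ} [Fact (0 < T)]
    (hf : Function.Periodic f T) (s t : ℝ) :
    ∫⁻ x in Ioo s (s + T), f x = ∫⁻ x in Ioo t (t + T), f x := by
  simp only [setLIntegral_congr Ioo_ae_eq_Ioc]
  have hcircle (u : ℝ) : ∫⁻ x in Ioc u (u + T), f x = ∫⁻ y : AddCircle T, hf.lift y := by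
    simp only [← AddCircle.lintegral_preimage T u, Function.Periodic.lift_coe]
  rw [hcircle, hcircle]

theorem Complex.setLIntegral_ball_le_polar (R : ℝ) (f : ℂ → ℝ≥0∞) :
    ∫⁻ z in ball 0 R, f z ≤
      ∫⁻ r in Ioo 0 R, ENNReal.ofReal r *
        ∫⁻ θ in Ioo 0 (2 * π), f (r * Complex.exp (θ * Complex.I)) := by
  have hpolar (p : ℝ × ℝ) :
      Complex.polarCoord.symm p = p.1 * Complex.exp (p.2 * Complex.I) := by
    simp [Complex.exp_mul_I]
  have hcircle (r : ℝ) (hr : 0 < r) :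
      ∫⁻ θ in Ioo (-π) π, (ball (0 : ℂ) R).indicator f (r * Complex.exp (θ * Complex.I)) =
        (Ioo 0 R).indicator
          (fun r => ∫⁻ θ in Ioo 0 (2 * π), f (r * Complex.exp (θ * Complex.I))) r := by
    have hnorm (θ : ℝ) : ‖(r : ℂ) * Complex.exp (θ * Complex.I)‖ = r := by
      simp [Complex.norm_exp_ofReal_mul_I, hr.le]
    by_cases hrR : r < R
    · have hper : Function.Periodic (fun θ : ℝ => f (r * Complex.exp (θ * Complex.I))) (2 * π) :=
        fun θ => by simpa using congrArg (fun w => f (r * w)) (Complex.exp_mul_I_periodic θ)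
      have : Fact (0 < 2 * π) := ⟨two_pi_pos⟩
      have hin (θ : ℝ) : (ball (0 : ℂ) R).indicator f (r * Complex.exp (θ * Complex.I)) =
          f (r * Complex.exp (θ * Complex.I)) :=
        indicator_of_mem (by rw [mem_ball_zero_iff, hnorm]; exact hrR) f
      simp only [hin, indicator_of_mem (show r ∈ Ioo 0 R from ⟨hr, hrR⟩)]
      simpa [two_mul, ← sub_eq_add_neg] using hper.setLIntegral_Ioo_add_eq (-π) 0
    · have hout (θ : ℝ) : (ball (0 : ℂ) R).indicator f (r * Complex.exp (θ * Complex.I)) = 0 :=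
        indicator_of_notMem (by rw [mem_ball_zero_iff, hnorm]; exact hrR) f
      simp only [hout, lintegral_zero,
        indicator_of_notMem (show r ∉ Ioo 0 R from fun h => hrR h.2)]
  calc ∫⁻ z in ball 0 R, f z
      = ∫⁻ p in Ioi 0 ×ˢ Ioo (-π) π,
          ENNReal.ofReal p.1 * (ball 0 R).indicator f (Complex.polarCoord.symm p) := by
        rw [← lintegral_indicator measurableSet_ball, ← Complex.lintegral_comp_polarCoord_symm]
        rfl
    _ ≤ ∫⁻ r in Ioi 0, ∫⁻ θ in Ioo (-π) π,
          ENNReal.ofReal r * (ball 0 R).indicator f (r * Complex.exp (θ * Complex.I)) := by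
        -- Tonelli as an inequality needs no measurability of `f`
        rw [Measure.volume_eq_prod, ← Measure.prod_restrict]
        simpa only [hpolar] using lintegral_prod_le _
    _ = ∫⁻ r in Ioi 0, (Ioo 0 R).indicator (fun r => ENNReal.ofReal r *
          ∫⁻ θ in Ioo 0 (2 * π), f (r * Complex.exp (θ * Complex.I))) r := by
        refine setLIntegral_congr_fun measurableSet_Ioi fun r hr => ?_
        rw [lintegral_const_mul' _ _ ENNReal.ofReal_ne_top, hcircle r hr]
        by_cases hrR : r ∈ Ioo 0 R <;> simp [hrR]
    _ ≤ _ := by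
        rw [← lintegral_indicator measurableSet_Ioo]
        exact setLIntegral_le_lintegral _ _

theorem lintegral_cube_mul_neg_deriv_comp_sq_le {ω : ℝ → ℝ} {R : ℝ} (hR : 0 ≤ R)
    (hdiff : DifferentiableOn ℝ ω (Icc 0 (R ^ 2))) (hanti : AntitoneOn ω (Icc 0 (R ^ 2))) :
    ∫⁻ r in Ioo 0 R, ENNReal.ofReal r * ENNReal.ofReal r ^ 2 * ENNReal.ofReal (-deriv ω (r ^ 2))
      ≤ ENNReal.ofReal (1 / 2 * (ω 0 - ω (R ^ 2)) * R ^ 2) := by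
  have hsq : MapsTo (fun r : ℝ => r ^ 2) (Icc 0 R) (Icc 0 (R ^ 2)) := fun r hr =>
    ⟨by positivity, pow_le_pow_left₀ hr.1 hr.2 2⟩
  have hanti' : AntitoneOn (fun r => ω (r ^ 2)) (Icc 0 R) := fun r hr s hs hrs =>
    hanti (hsq hr) (hsq hs) (pow_le_pow_left₀ hr.1 hrs 2)
  have hderiv : ∀ r ∈ Ioo 0 R, HasDerivAt (fun r => ω (r ^ 2)) (deriv ω (r ^ 2) * (2 * r)) r := by
    intro r hr
    have hr2 : r ^ 2 ∈ Ioo 0 (R ^ 2) := ⟨pow_pos hr.1 2, pow_lt_pow_left₀ hr.2 hr.1.le two_ne_zero⟩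
    have hω : DifferentiableAt ℝ ω (r ^ 2) :=
      (hdiff.mono Ioo_subset_Icc_self).differentiableAt (isOpen_Ioo.mem_nhds hr2)
    exact (HasDerivAt.comp (h := fun x : ℝ => x ^ 2) r hω.hasDerivAt
      (hasDerivAt_pow 2 r)).congr_deriv (by norm_num)
  have hFTC := hanti'.lintegral_ofReal_neg_deriv hR
    ((hdiff.continuousOn.comp (continuous_pow 2).continuousOn hsq))
    (fun r hr => (hderiv r hr).differentiableAt.differentiableWithinAt)
  calc ∫⁻ r in Ioo 0 R, ENNReal.ofReal r * ENNReal.ofReal r ^ 2 * ENNReal.ofReal (-deriv ω (r ^ 2))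
      ≤ ∫⁻ r in Ioo 0 R, ENNReal.ofReal (R ^ 2 / 2) *
          ENNReal.ofReal (-deriv (fun r => ω (r ^ 2)) r) := by
        refine setLIntegral_mono' measurableSet_Ioo fun r hr => ?_
        rw [(hderiv r hr).deriv,
          show -(deriv ω (r ^ 2) * (2 * r)) = 2 * r * -deriv ω (r ^ 2) by ring,
          ENNReal.ofReal_mul (by linarith [hr.1]), ← mul_assoc,
          ← ENNReal.ofReal_mul (by positivity), ← ENNReal.ofReal_pow hr.1.le,
          ← ENNReal.ofReal_mul hr.1.le]
        have hr2 : r ^ 2 ≤ R ^ 2 := pow_le_pow_left₀ hr.1.le hr.2.le 2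
        gcongr ?_ * _
        exact ENNReal.ofReal_le_ofReal (by nlinarith [mul_le_mul_of_nonneg_left hr2 hr.1.le])
    _ = ENNReal.ofReal (1 / 2 * (ω 0 - ω (R ^ 2)) * R ^ 2) := by
        rw [lintegral_const_mul' _ _ ENNReal.ofReal_ne_top, hFTC,
          ← ENNReal.ofReal_mul (by positivity)]
        congr 1
        rw [zero_pow two_ne_zero]
        ring

theorem Dq_le_of_Mq_general
    (R q : ℝ) (hR : 0 < R)
    (ω : ℝ → ℝ)
    (hωdiff : DifferentiableOn ℝ ω (Set.Icc 0 (R ^ 2)))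
    (hωdec : AntitoneOn ω (Set.Icc 0 (R ^ 2)))
    (g : ℂ → ℂ) :
    (∫⁻ z in Metric.ball (0 : ℂ) R,
        (‖z‖₊ : ENNReal) ^ 2 * (‖g z‖₊ : ENNReal) ^ q *
          ENNReal.ofReal (-(deriv ω (‖z‖ ^ 2))))
      ≤ ENNReal.ofReal (1 / 2 * (ω 0 - ω (R ^ 2)) * R ^ 2) *
        ⨆ r ∈ Set.Ioo (0 : ℝ) R,
          ∫⁻ θ in Set.Ioo (0 : ℝ) (2 * Real.pi),
            (‖g ((r : ℂ) * Complex.exp ((θ : ℂ) * Complex.I))‖₊ : ENNReal) ^ q := by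
  set M : ℝ → ℝ≥0∞ := fun r => ∫⁻ θ in Ioo 0 (2 * π),
    (‖g ((r : ℂ) * Complex.exp ((θ : ℂ) * Complex.I))‖₊ : ℝ≥0∞) ^ q
  set W : ℝ → ℝ≥0∞ := fun r =>
    ENNReal.ofReal r * ENNReal.ofReal r ^ 2 * ENNReal.ofReal (-deriv ω (r ^ 2))
  have hW : Measurable W := by fun_prop
  calc _ ≤ ∫⁻ r in Ioo 0 R, ENNReal.ofReal r * ∫⁻ θ in Ioo 0 (2 * π),
          (‖(r : ℂ) * Complex.exp (θ * Complex.I)‖₊ : ℝ≥0∞) ^ 2 *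
            (‖g (r * Complex.exp (θ * Complex.I))‖₊ : ℝ≥0∞) ^ q *
            ENNReal.ofReal (-deriv ω (‖(r : ℂ) * Complex.exp (θ * Complex.I)‖ ^ 2)) :=
        Complex.setLIntegral_ball_le_polar R _
    _ = ∫⁻ r in Ioo 0 R, W r * M r := by
        refine setLIntegral_congr_fun measurableSet_Ioo fun r hr => ?_
        have hnorm (θ : ℝ) : ‖(r : ℂ) * Complex.exp (θ * Complex.I)‖ = r := by
          simp [Complex.norm_exp_ofReal_mul_I, hr.1.le]
        have hnnnorm (θ : ℝ) :
            (‖(r : ℂ) * Complex.exp (θ * Complex.I)‖₊ : ℝ≥0∞) = ENNReal.ofReal r := by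
          rw [← enorm_eq_nnnorm, ← ofReal_norm, hnorm]
        simp only [hnnnorm, hnorm, W, M]
        rw [← lintegral_const_mul' _ _ (by finiteness),
          ← lintegral_const_mul' _ _ (by finiteness)]
        congr 1 with θ
        ring
    _ ≤ ∫⁻ r in Ioo 0 R, W r * ⨆ r ∈ Ioo 0 R, M r :=
        setLIntegral_mono' measurableSet_Ioo fun r hr => by gcongr; exact le_biSup M hr
    _ = (∫⁻ r in Ioo 0 R, W r) * ⨆ r ∈ Ioo 0 R, M r := lintegral_mul_const _ hW
    _ ≤ _ := by gcongr; exact lintegral_cube_mul_neg_deriv_comp_sq_le hR.le hωdiff hωdec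

/-- For `ω` differentiable, positive and non-increasing on `[0,R²]` and `g` analytic
in `𝔻_R`, `D_q(R,g;ω)^q ≤ (1/2)(ω(0) − ω(R²)) R² M_q(R,g)^q`, where
`M_q(R,g)^q = lim_{r→R⁻} M_q(r,g)^q = sup_{0<r<R} M_q(r,g)^q`. -/
theorem Dq_le_of_Mq
    (R q : ℝ) (hR : 0 < R) (hq : 1 ≤ q)
    (ω : ℝ → ℝ)
    (hωdiff : DifferentiableOn ℝ ω (Set.Icc 0 (R ^ 2)))
    (hωpos : ∀ x ∈ Set.Icc (0 : ℝ) (R ^ 2), 0 < ω x)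
    (hωdec : AntitoneOn ω (Set.Icc 0 (R ^ 2)))
    (hωcont : Filter.Tendsto ω (nhdsWithin (R ^ 2) (Set.Iio (R ^ 2))) (nhds (ω (R ^ 2))))
    (g : ℂ → ℂ) (hg : DifferentiableOn ℂ g (Metric.ball 0 R)) :
    (∫⁻ z in Metric.ball (0 : ℂ) R,
        (‖z‖₊ : ENNReal) ^ 2 * (‖g z‖₊ : ENNReal) ^ q *
          ENNReal.ofReal (-(deriv ω (‖z‖ ^ 2))))
      ≤ ENNReal.ofReal (1 / 2 * (ω 0 - ω (R ^ 2)) * R ^ 2) *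
        ⨆ r ∈ Set.Ioo (0 : ℝ) R,
          ∫⁻ θ in Set.Ioo (0 : ℝ) (2 * Real.pi),
            (‖g ((r : ℂ) * Complex.exp ((θ : ℂ) * Complex.I))‖₊ : ENNReal) ^ q :=
  Dq_le_of_Mq_general R q hR ω hωdiff hωdec g
end
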